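/- arXiv:1508.00345 — 9 statements merged into one kernel-verified Lean document; each statement's English description precedes it below -/
import Mathlib

section
/- Let R be an integral domain, let s_1, …, s_ℓ ∈ R be elements generating the unit ideal, let A ∈ M_{n×m}(R) and B ∈ R^n. Then the linear system A·X = B has a solution X ∈ R^m if and only if for every i ∈ {1,…,ℓ} the system obtained by mapping A and B into the localization R[1/s_i] (via the algebra map R → Localization.Away s_i) has a solution with entries in R[1/s_i]. -/
/-- Local-global principle: over an integral domain, a linear system `A·X = B` has a
solution over `R` iff it has a solution over each localization `R[1/sᵢ]` for a family
of comaximal elements `s₁, …, s_ℓ`. -/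
theorem stmt_2 {R : Type*} [CommRing R] [IsDomain R]
    {ℓ n m : ℕ} (s : Fin ℓ → R) (hs : Ideal.span (Set.range s) = ⊤)
    (A : Matrix (Fin n) (Fin m) R) (B : Fin n → R) :
    (∃ X : Fin m → R, A.mulVec X = B) ↔
      ∀ i : Fin ℓ,
        ∃ X : Fin m → Localization.Away (s i),
          (A.map (algebraMap R (Localization.Away (s i)))).mulVec X
            = fun k => algebraMap R (Localization.Away (s i)) (B k) := by
  constructor
  · rintro ⟨X, hX⟩ i
    refine ⟨fun j => algebraMap R _ (X j), ?_⟩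
    funext k
    have := congrFun hX k
    simp only [Matrix.mulVec, dotProduct, Matrix.map_apply, ← map_mul, ← map_sum]
    rw [show ∑ j, A k j * X j = B k from this]
  · intro h
    -- Step 1: for each i, clear denominators
    have key : ∀ i : Fin ℓ, ∃ r ∈ Submonoid.powers (s i), ∃ Y : Fin m → R,
        A.mulVec Y = r • B := by
      intro i
      obtain ⟨X, hX⟩ := h i
      obtain ⟨b, hb⟩ := IsLocalization.exist_integer_multiples_of_finite
        (Submonoid.powers (s i)) X
      choose Y0 hY0 using hb
      have hAk : ∀ k, algebraMap R (Localization.Away (s i)) ((A.mulVec Y0) k)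
          = algebraMap R (Localization.Away (s i)) ((b : R) * B k) := by
        intro k
        have h1 := congrFun hX k
        simp only [Matrix.mulVec, dotProduct, Matrix.map_apply] at h1 ⊢
        simp_rw [map_sum, map_mul]
        calc ∑ j, algebraMap R (Localization.Away (s i)) (A k j)
                * algebraMap R (Localization.Away (s i)) (Y0 j)
            = ∑ j, algebraMap R (Localization.Away (s i)) (A k j) * ((b : R) • X j) := by
              simp_rw [hY0]
          _ = (b : R) • ∑ j, algebraMap R (Localization.Away (s i)) (A k j) * X j := by
              rw [Finset.smul_sum]; congr 1; funext j; rw [mul_smul_comm]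
          _ = algebraMap R (Localization.Away (s i)) (b : R)
                * algebraMap R (Localization.Away (s i)) (B k) := by
              rw [h1, Algebra.smul_def]
      have hc : ∀ k, ∃ c : Submonoid.powers (s i),
          (c : R) * ((A.mulVec Y0) k) = (c : R) * ((b : R) * B k) :=
        fun k => (IsLocalization.eq_iff_exists (Submonoid.powers (s i))
          (Localization.Away (s i))).mp (hAk k)
      choose c hcc using hc
      refine ⟨(∏ k, (c k : R)) * b, mul_mem (prod_mem fun k _ => (c k).2) b.2,
        (∏ k, (c k : R)) • Y0, ?_⟩
      funext k
      rw [Matrix.mulVec_smul]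
      have hprod : (∏ k', (c k' : R)) = (∏ k' ∈ Finset.univ.erase k, (c k' : R)) * (c k : R) := by
        rw [Finset.prod_erase_mul _ _ (Finset.mem_univ k)]
      simp only [Pi.smul_apply, smul_eq_mul, hprod]
      rw [mul_assoc, hcc k]; ring
    choose r hr Y hY using key
    -- Step 2: span of the r's is ⊤
    choose N hN using fun i => (hr i)
    have hspan : (1 : R) ∈ Ideal.span (Set.range r) := by
      have htop := Ideal.span_pow_eq_top (Set.range s) hs (Finset.univ.sup N)
      have hle : Ideal.span ((· ^ Finset.univ.sup N) '' Set.range s)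
          ≤ Ideal.span (Set.range r) := by
        apply Ideal.span_le.mpr
        rintro x ⟨y, ⟨i, rfl⟩, rfl⟩
        have hpow : s i ^ Finset.univ.sup N = s i ^ (Finset.univ.sup N - N i) * r i := by
          rw [← hN i, ← pow_add, Nat.sub_add_cancel (Finset.le_sup (Finset.mem_univ i))]
        simp only
        rw [hpow]
        exact Ideal.mul_mem_left _ _ (Ideal.subset_span ⟨i, rfl⟩)
      exact hle (htop ▸ Submodule.mem_top)
    obtain ⟨co, hco⟩ := (Submodule.mem_span_range_iff_exists_fun R).mp hspan
    refine ⟨∑ i, co i • Y i, ?_⟩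
    have hlin : A.mulVec (∑ i, co i • Y i) = ∑ i, co i • A.mulVec (Y i) := by
      simp_rw [← Matrix.mulVecLin_apply, map_sum, map_smul]
    rw [hlin]
    funext k
    simp only [Finset.sum_apply, Pi.smul_apply, smul_eq_mul]
    calc ∑ i, co i * (A.mulVec (Y i)) k = ∑ i, co i * (r i * B k) := by
          simp_rw [hY]; rfl
      _ = (∑ i, co i * r i) * B k := by rw [Finset.sum_mul]; simp_rw [mul_assoc]
      _ = B k := by
          have h1 : (∑ i, co i * r i) = 1 := by simpa [smul_eq_mul] using hco
          rw [h1, one_mul]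
end

section
/- Let R be a Prüfer domain and let a and b be finitely generated ideals of R. Then there exist s, t ∈ R with s + t = 1, s·b ⊆ a and t·a ⊆ b; equivalently, the transporter ideals satisfy (a : b) + (b : a) = R. -/
/-- Over a Prüfer domain, for finitely generated ideals `a` and `b` one has
`(a : b) + (b : a) = R`: there exist `s, t` with `s + t = 1`, `s·b ⊆ a`, `t·a ⊆ b`. -/
theorem stmt_4 {R : Type*} [CommRing R] [IsDomain R]
    (hpruf : ∀ I : Ideal R, I.FG → I ≠ ⊥ →
      ∃ (J : Ideal R) (c : R), J.FG ∧ c ≠ 0 ∧ I * J = Ideal.span {c})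
    (a b : Ideal R) (ha : a.FG) (hb : b.FG) :
    ∃ s t : R, s + t = 1 ∧ (∀ x ∈ b, s * x ∈ a) ∧ (∀ x ∈ a, t * x ∈ b) := by
  by_cases hb0 : b = ⊥
  · exact ⟨1, 0, by ring, fun x hx => by
      simp [hb0, Ideal.mem_bot] at hx; simp [hx], fun x hx => by
      simp [hb0, Ideal.mem_bot]⟩
  by_cases ha0 : a = ⊥
  · exact ⟨0, 1, by ring, fun x hx => by
      simp [ha0, Ideal.mem_bot], fun x hx => by
      simp [ha0, Ideal.mem_bot] at hx; simp [hx]⟩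
  have hab : a + b ≠ ⊥ := by
    intro h
    exact ha0 (le_bot_iff.mp (le_trans le_sup_left h.le))
  obtain ⟨J, c, hJfg, hc, hmul⟩ := hpruf (a + b) (Submodule.FG.sup ha hb) hab
  have hcmem : c ∈ a * J + b * J := by
    rw [← add_mul, hmul]
    exact Ideal.mem_span_singleton_self c
  obtain ⟨x, hx, y, hy, hxy⟩ := Submodule.mem_sup.mp hcmem
  have haJ : a * J ≤ Ideal.span {c} := by
    rw [← hmul]; exact Ideal.mul_mono_left le_sup_left
  have hbJ : b * J ≤ Ideal.span {c} := by
    rw [← hmul]; exact Ideal.mul_mono_left le_sup_right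
  obtain ⟨s, hs⟩ := Ideal.mem_span_singleton'.mp (haJ hx)
  obtain ⟨t, ht⟩ := Ideal.mem_span_singleton'.mp (hbJ hy)
  have hst : s + t = 1 := by
    have : (s + t) * c = 1 * c := by
      rw [add_mul, hs, ht, one_mul, hxy]
    exact mul_right_cancel₀ hc this
  refine ⟨s, t, hst, ?_, ?_⟩
  · intro β hβ
    have hmem : x * β ∈ Ideal.span {c} * a := by
      have h1 : x * β ∈ (a * J) * b := Ideal.mul_mem_mul hx hβ
      have heq : (a * J) * b = (b * J) * a := by ring
      rw [heq] at h1
      exact Ideal.mul_mono_left hbJ h1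
    obtain ⟨α, hα, hcα⟩ := Ideal.mem_span_singleton_mul.mp hmem
    have : c * (s * β) = c * α := by
      rw [hcα, ← hs]; ring
    rwa [mul_left_cancel₀ hc this]
  · intro α hα
    have hmem : y * α ∈ Ideal.span {c} * b := by
      have h1 : y * α ∈ (b * J) * a := Ideal.mul_mem_mul hy hα
      have heq : (b * J) * a = (a * J) * b := by ring
      rw [heq] at h1
      exact Ideal.mul_mono_left haJ h1
    obtain ⟨β, hβ, hcβ⟩ := Ideal.mem_span_singleton_mul.mp hmem
    have : c * (t * α) = c * β := by
      rw [hcβ, ← ht]; ring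
    rwa [mul_left_cancel₀ hc this]
end

section
/- Let R be a Prüfer domain and let a and b be finitely generated ideals of R. Then there is an isomorphism of R-modules a × b ≅ (a + b) × (a ∩ b). -/
/-!
The sequence `0 → a ∩ b → a × b → a + b → 0`, `x ↦ (x, -x)`, `(y, z) ↦ y + z`, is exact for any
two submodules. In a Prüfer domain the finitely generated ideal `a + b` is invertible, hence
(embedded in the fraction field, where it becomes a unit submodule) projective, so the sequence
splits.
-/

namespace Submodule

variable {R M : Type*} [Ring R] [AddCommGroup M] [Module R M] (p q : Submodule R M)

def infToProd : ↥(p ⊓ q) →ₗ[R] ↥p × ↥q :=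
  (inclusion inf_le_left).prod (-inclusion inf_le_right)

def prodToSup : ↥p × ↥q →ₗ[R] ↥(p ⊔ q) :=
  (inclusion le_sup_left).coprod (inclusion le_sup_right)

@[simp] lemma coe_prodToSup_apply (y : ↥p × ↥q) : (prodToSup p q y : M) = y.1 + y.2 := rfl

lemma infToProd_injective : Function.Injective (infToProd p q) :=
  fun _ _ h ↦ Subtype.ext congr(($h).1.1)

lemma prodToSup_surjective : Function.Surjective (prodToSup p q) := by
  rintro ⟨x, hx⟩
  obtain ⟨y, hy, z, hz, rfl⟩ := mem_sup.mp hx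
  exact ⟨(⟨y, hy⟩, ⟨z, hz⟩), rfl⟩

lemma exact_infToProd_prodToSup : Function.Exact (infToProd p q) (prodToSup p q) := by
  intro w
  constructor
  · obtain ⟨⟨y, hy⟩, ⟨z, hz⟩⟩ := w
    intro h
    have hzy : z = -y := eq_neg_of_add_eq_zero_right congr(($h : M))
    have hyq : y ∈ q := by simpa [hzy] using hz
    exact ⟨⟨y, hy, hyq⟩, by ext <;> simp [infToProd, hzy]⟩
  · rintro ⟨x, rfl⟩
    ext
    simp [infToProd]

theorem nonempty_prod_equiv_sup_prod_inf [Module.Projective R ↥(p ⊔ q)] :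
    Nonempty ((↥p × ↥q) ≃ₗ[R] ↥(p ⊔ q) × ↥(p ⊓ q)) := by
  obtain ⟨l, hl⟩ := Module.projective_lifting_property _ LinearMap.id (prodToSup_surjective p q)
  obtain ⟨e, -⟩ := (exact_infToProd_prodToSup p q).splitSurjectiveEquiv
    (infToProd_injective p q) ⟨l, hl⟩
  exact ⟨e ≪≫ₗ LinearEquiv.prodComm R _ _⟩

end Submodule

namespace Ideal

variable {R : Type*} [CommRing R] [IsDomain R]

theorem projective_of_mul_eq_span_singleton {I J : Ideal R} {c : R} (hc : c ≠ 0)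
    (hIJ : I * J = span {c}) : Module.Projective R I := by
  let K := FractionRing R
  let ι := (Algebra.ofId R K).toLinearMap
  have hι : Function.Injective ι := IsFractionRing.injective R K
  have hunit : IsUnit (Submodule.map ι I) := by
    refine .of_mul_eq_one (Submodule.map ι J * Submodule.span R {(ι c)⁻¹}) ?_
    have hc' : ι c ≠ 0 := (map_ne_zero_iff ι hι).mpr hc
    rw [← mul_assoc, ← Submodule.map_mul, hIJ, Ideal.span, Submodule.map_span,
      Set.image_singleton, Submodule.span_mul_span, Set.singleton_mul_singleton,
      mul_inv_cancel₀ hc', Submodule.one_eq_span]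
  have := Submodule.projective_of_isUnit hunit
  exact .of_equiv' (Submodule.equivMapOfInjective ι hι I).symm

end Ideal

/-- Over a Prüfer domain, for finitely generated ideals `a` and `b` there is an
isomorphism of `R`-modules `a × b ≃ (a + b) × (a ∩ b)`. -/
theorem stmt_5 {R : Type*} [CommRing R] [IsDomain R]
    (hpruf : ∀ I : Ideal R, I.FG → I ≠ ⊥ →
      ∃ (J : Ideal R) (c : R), J.FG ∧ c ≠ 0 ∧ I * J = Ideal.span {c})
    (a b : Ideal R) (ha : a.FG) (hb : b.FG) :
    Nonempty ((↥a × ↥b) ≃ₗ[R] (↥(a + b) × ↥(a ⊓ b))) := by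
  rw [Ideal.add_eq_sup]
  have : Module.Projective R ↥(a ⊔ b) := by
    rcases eq_or_ne (a ⊔ b) ⊥ with h | h
    · rw [h]
      infer_instance
    · obtain ⟨J, c, -, hc, hIJ⟩ := hpruf _ (Submodule.FG.sup ha hb) h
      exact Ideal.projective_of_mul_eq_span_singleton hc hIJ
  exact Submodule.nonempty_prod_equiv_sup_prod_inf a b
end

section
/- Let R be a Prüfer domain. Every finitely generated projective R-module P is isomorphic, as an R-module, to a finite direct sum ⊕_{i=1}^r I_i where each I_i is a nonzero finitely generated (hence invertible) ideal of R. -/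
/-!
A nonzero finitely generated ideal `I` of a Prüfer domain satisfies `I * J = (c)` with `c ≠ 0`,
so it becomes an invertible submodule of the fraction field and is therefore projective. A
finitely generated projective module embeds in some `Rⁿ` as a retract. For a finitely generated
`M ⊆ Rⁿ⁺¹`, the image of the first coordinate is a finitely generated, hence projective, ideal `I`,
so `M ≅ I × K` where the kernel `K` is finitely generated and embeds in `Rⁿ`; induction on `n`,
discarding the zero ideals, gives the decomposition.
-/

open nonZeroDivisors

section

variable {R : Type*} [CommRing R]

theorem Ideal.projective_of_mul_eq_span_singleton_s6 {I J : Ideal R} {c : R} (hc : c ∈ R⁰)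
    (h : I * J = Ideal.span {c}) : Module.Projective R I := by
  let K := FractionRing R
  have hIJ : IsUnit (IsLocalization.coeSubmodule K (I * J)) := by
    rw [h, IsLocalization.coeSubmodule_span_singleton]
    exact (IsLocalization.map_units K ⟨c, hc⟩).map (Submodule.spanSingleton R)
  rw [IsLocalization.coeSubmodule_mul] at hIJ
  have := Submodule.projective_of_isUnit (isUnit_of_mul_isUnit_left hIJ)
  let e : I ≃ₗ[R] IsLocalization.coeSubmodule K I :=
    Submodule.equivMapOfInjective _ (IsFractionRing.injective R K) I
  exact .of_equiv e.symm

theorem LinearMap.nonempty_equiv_range_prod_ker {M N : Type*} [AddCommGroup M] [Module R M]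
    [AddCommGroup N] [Module R N] (φ : M →ₗ[R] N) [Module.Projective R (range φ)] :
    Nonempty (M ≃ₗ[R] range φ × ker φ) := by
  obtain ⟨s, hs⟩ := φ.rangeRestrict.exists_rightInverse_of_surjective φ.range_rangeRestrict
  let e := ((exact_subtype_ker_map φ.rangeRestrict).splitSurjectiveEquiv
    (ker φ.rangeRestrict).injective_subtype ⟨s, hs⟩).1
  exact ⟨e ≪≫ₗ .prodComm R _ _ ≪≫ₗ .prodCongr (.refl R _) (.ofEq _ _ φ.ker_rangeRestrict)⟩

def IsDirectSumOfIdeals (R M : Type*) [CommRing R] [AddCommGroup M] [Module R M] : Prop :=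
  ∃ (r : ℕ) (I : Fin r → Ideal R),
    (∀ i, (I i).FG ∧ I i ≠ ⊥) ∧ Nonempty (M ≃ₗ[R] ((i : Fin r) → I i))

namespace IsDirectSumOfIdeals

variable {M N : Type*} [AddCommGroup M] [Module R M] [AddCommGroup N] [Module R N]

theorem of_subsingleton [Subsingleton M] : IsDirectSumOfIdeals R M :=
  ⟨0, finZeroElim, finZeroElim, ⟨.ofSubsingleton _ _⟩⟩

theorem of_linearEquiv (e : M ≃ₗ[R] N) (h : IsDirectSumOfIdeals R N) :
    IsDirectSumOfIdeals R M :=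
  let ⟨r, I, hI, ⟨e'⟩⟩ := h
  ⟨r, I, hI, ⟨e ≪≫ₗ e'⟩⟩

theorem ideal_prod {I : Ideal R} (hI : I.FG) (h : IsDirectSumOfIdeals R M) :
    IsDirectSumOfIdeals R (I × M) := by
  obtain ⟨r, J, hJ, ⟨e⟩⟩ := h
  by_cases hI0 : I = ⊥
  · subst hI0
    exact ⟨r, J, hJ, ⟨.uniqueProd ≪≫ₗ e⟩⟩
  · let I' : Fin (r + 1) → Ideal R := Fin.cons I J
    exact ⟨r + 1, I', Fin.cases ⟨hI, hI0⟩ hJ,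
      ⟨.prodCongr (.refl R I) e ≪≫ₗ Fin.consLinearEquiv R fun i ↦ I' i⟩⟩

theorem of_injective (hR : ∀ I : Ideal R, I.FG → Module.Projective R I) {n : ℕ}
    [Module.Finite R M] (f : M →ₗ[R] Fin n → R) (hf : Function.Injective f) :
    IsDirectSumOfIdeals R M := by
  induction n generalizing M with
  | zero =>
    have : Subsingleton M := hf.subsingleton
    exact of_subsingleton
  | succ n ih =>
    let φ : M →ₗ[R] R := .proj 0 ∘ₗ f
    have hφ : (LinearMap.range φ).FG := Module.Finite.iff_fg.mp inferInstance
    have := hR _ hφ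
    obtain ⟨e⟩ := φ.nonempty_equiv_range_prod_ker
    have : Module.Finite R (LinearMap.ker φ) :=
      .of_surjective (.snd R _ _ ∘ₗ e.toLinearMap) (Prod.snd_surjective.comp e.surjective)
    have hker : Function.Injective (.funLeft R R Fin.succ ∘ₗ f ∘ₗ (LinearMap.ker φ).subtype) := by
      intro x y hxy
      refine Subtype.ext (hf (funext fun i ↦ Fin.cases ?_ (fun j ↦ congr_fun hxy j) i))
      exact (LinearMap.mem_ker.mp x.2).trans (LinearMap.mem_ker.mp y.2).symm
    exact .of_linearEquiv e (ideal_prod hφ (ih _ hker))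

end IsDirectSumOfIdeals

end

/-- Over a Prüfer domain, every finitely generated projective module is isomorphic to a
finite direct sum of nonzero finitely generated ideals. -/
theorem stmt_6 {R : Type*} [CommRing R] [IsDomain R]
    (hpruf : ∀ I : Ideal R, I.FG → I ≠ ⊥ →
      ∃ (J : Ideal R) (c : R), J.FG ∧ c ≠ 0 ∧ I * J = Ideal.span {c})
    (P : Type*) [AddCommGroup P] [Module R P]
    [Module.Finite R P] [Module.Projective R P] :
    ∃ (r : ℕ) (I : Fin r → Ideal R),
      (∀ i, (I i).FG ∧ I i ≠ ⊥) ∧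
      Nonempty (P ≃ₗ[R] ((i : Fin r) → ↥(I i))) := by
  have hproj (I : Ideal R) (hI : I.FG) : Module.Projective R I := by
    by_cases hI0 : I = ⊥
    · subst hI0
      infer_instance
    · obtain ⟨J, c, -, hc, hIJ⟩ := hpruf I hI hI0
      exact I.projective_of_mul_eq_span_singleton_s6 (mem_nonZeroDivisors_of_ne_zero hc) hIJ
  obtain ⟨n, f, hf⟩ := Module.Finite.exists_fin' R P
  obtain ⟨s, hs⟩ := f.exists_rightInverse_of_surjective (LinearMap.range_eq_top.mpr hf)
  exact IsDirectSumOfIdeals.of_injective hproj s (LinearMap.injective_of_comp_eq_id s f hs)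
end

section
/- Let R be a Prüfer domain with fraction field K and let n ∈ ℕ. Every finitely generated R-submodule of K^n is a projective R-module. -/
/-!
After clearing denominators, a nonzero finitely generated `R`-submodule of `K` is a multiple of a
nonzero finitely generated ideal, so over a Prüfer domain it is an invertible submodule of `K` and
hence projective. For `K^n`, project onto the last coordinate: the image is a finitely generated
submodule of `K`, hence projective, so the projection splits, and the kernel is a finitely
generated module embedding into `K^(n-1)`, projective by induction.
-/

open Submodule LinearMap IsLocalization

def IsPruferDomain (R : Type*) [CommRing R] : Prop :=
  ∀ I : Ideal R, I.FG → I ≠ ⊥ → ∃ (J : Ideal R) (c : R), J.FG ∧ c ≠ 0 ∧ I * J = Ideal.span {c}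

section Splitting

variable {R M N : Type*} [Ring R] [AddCommGroup M] [Module R M] [AddCommGroup N] [Module R N]
  [Module.Projective R N] {g : M →ₗ[R] N}

theorem LinearMap.nonempty_linearEquiv_ker_prod_of_surjective (hg : Function.Surjective g) :
    Nonempty (M ≃ₗ[R] ker g × N) := by
  obtain ⟨l, hl⟩ := g.exists_rightInverse_of_surjective (range_eq_top.2 hg)
  exact ⟨(g.exact_subtype_ker_map.splitSurjectiveEquiv (ker g).injective_subtype ⟨l, hl⟩).1⟩

theorem Module.Finite.ker_of_surjective [Module.Finite R M] (hg : Function.Surjective g) :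
    Module.Finite R (ker g) :=
  let ⟨e⟩ := nonempty_linearEquiv_ker_prod_of_surjective hg
  .of_surjective (fst R _ N ∘ₗ e.toLinearMap) (Prod.fst_surjective.comp e.surjective)

theorem Module.Projective.of_surjective_of_projective_ker (hg : Function.Surjective g)
    [Module.Projective R (ker g)] : Module.Projective R M :=
  let ⟨e⟩ := nonempty_linearEquiv_ker_prod_of_surjective hg
  .of_equiv' e.symm

end Splitting

theorem Module.Projective.of_injective_fin_pi {R V : Type*} [Ring R] [AddCommGroup V]
    [Module R V] (hV : ∀ N : Submodule R V, N.FG → Module.Projective R N) (n : ℕ) {M : Type*}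
    [AddCommGroup M] [Module R M] [Module.Finite R M] (f : M →ₗ[R] Fin n → V)
    (hf : Function.Injective f) : Module.Projective R M := by
  induction n generalizing M with
  | zero =>
    have : Subsingleton M := hf.subsingleton
    infer_instance
  | succ n ih =>
    let g := (proj (Fin.last n) ∘ₗ f).rangeRestrict
    have hg : Function.Surjective g := surjective_rangeRestrict _
    have : Module.Projective R (range (proj (Fin.last n) ∘ₗ f)) :=
      hV _ (Module.Finite.iff_fg.1 (Module.Finite.range _))
    have : Module.Finite R (ker g) := .ker_of_surjective hg
    have : Module.Projective R (ker g) := by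
      refine ih (funLeft R V Fin.castSucc ∘ₗ f ∘ₗ (ker g).subtype) ?_
      refine (injective_iff_map_eq_zero _).2 fun ⟨x, hx⟩ h ↦ Subtype.ext <| hf ?_
      have hlast : f x (Fin.last n) = 0 := congrArg Subtype.val (mem_ker.1 hx)
      have hcast (i : Fin n) : f x i.castSucc = 0 := congrFun h i
      simpa using funext fun i ↦ Fin.lastCases hlast hcast i
    exact .of_surjective_of_projective_ker hg

section FractionField

variable {R K : Type*} [CommRing R] [IsDomain R] [Field K] [Algebra R K] [IsFractionRing R K]

theorem isUnit_coeSubmodule_of_mul_eq_span_singleton {I J : Ideal R} {c : R} (hc : c ≠ 0)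
    (hIJ : I * J = Ideal.span {c}) : IsUnit (coeSubmodule K I) := by
  refine isUnit_of_mul_isUnit_left (y := coeSubmodule K J) ?_
  rw [← coeSubmodule_mul, hIJ, coeSubmodule_span_singleton]
  exact (IsFractionRing.to_map_ne_zero_of_mem_nonZeroDivisors
    (mem_nonZeroDivisors_of_ne_zero hc)).isUnit.map (spanSingleton R)

open Pointwise in
theorem IsPruferDomain.isUnit_of_fg_of_ne_bot (hR : IsPruferDomain R) {M : Submodule R K}
    (hM : M.FG) (hM0 : M ≠ ⊥) : IsUnit M := by
  let F : FractionalIdeal (nonZeroDivisors R) K := ⟨M, FractionalIdeal.isFractional_of_fg hM⟩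
  have hden : span R {algebraMap R K F.den} * M = coeSubmodule K F.num := by
    rw [span_singleton_mul, coeSubmodule, ← F.den_mul_self_eq_num]
    ext x
    simp only [mem_smul_pointwise_iff_exists, Submonoid.smul_def, algebraMap_smul]
    rfl
  have hd : IsUnit (span R {algebraMap R K F.den}) :=
    (IsFractionRing.to_map_ne_zero_of_mem_nonZeroDivisors F.den.2).isUnit.map (spanSingleton R)
  have hnum : F.num.FG := by
    refine (coeSubmodule_fg K (IsFractionRing.injective R K) _).1 ?_
    rw [← hden]
    exact (fg_span_singleton _).mul hM
  have hnum0 : F.num ≠ ⊥ := by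
    rintro h
    rw [h, coeSubmodule_bot] at hden
    exact hM0 (hd.mul_right_eq_zero.1 hden)
  obtain ⟨J, c, -, hc, hIJ⟩ := hR F.num hnum hnum0
  refine isUnit_of_mul_isUnit_right (x := span R {algebraMap R K F.den}) ?_
  rw [hden]
  exact isUnit_coeSubmodule_of_mul_eq_span_singleton hc hIJ

theorem IsPruferDomain.projective_of_fg (hR : IsPruferDomain R) {M : Submodule R K}
    (hM : M.FG) : Module.Projective R M := by
  rcases eq_or_ne M ⊥ with rfl | hM0
  · infer_instance
  · exact projective_of_isUnit (hR.isUnit_of_fg_of_ne_bot hM hM0)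

end FractionField

/-- Over a Prüfer domain `R` with fraction field `K`, every finitely generated
`R`-submodule of `K^n` is projective. -/
theorem stmt_8 {R : Type*} [CommRing R] [IsDomain R]
    (hpruf : ∀ I : Ideal R, I.FG → I ≠ ⊥ →
      ∃ (J : Ideal R) (c : R), J.FG ∧ c ≠ 0 ∧ I * J = Ideal.span {c})
    (K : Type*) [Field K] [Algebra R K] [IsFractionRing R K]
    (n : ℕ) (M : Submodule R (Fin n → K)) (hM : M.FG) :
    Module.Projective R ↥M := by
  have hR : IsPruferDomain R := hpruf
  have : Module.Finite R M := Module.Finite.iff_fg.2 hM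
  exact .of_injective_fin_pi (fun _ ↦ hR.projective_of_fg) n M.subtype M.injective_subtype
end

section
/- Let R be a Prüfer domain. Every finitely presented torsion-free R-module M (i.e., such that r·x = 0 with r ∈ R, x ∈ M implies r = 0 or x = 0) is a projective R-module. -/
/-!
Torsion-free modules over a Prüfer domain are flat, and finitely presented flat modules are
projective. For flatness it suffices that `I ⊗ M → M` is injective for every nonzero finitely
generated ideal `I`. Choose `J` and `c ≠ 0` with `I * J = (c)` and write `c = ∑ aᵢ bᵢ` with
`aᵢ ∈ I`, `bᵢ ∈ J`. Each `j ∈ J` gives a map `x ↦ j x / c` from `I` to `R`, hence a map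
`g_j : I ⊗ M → M` with `c • g_j = j • μ`, where `μ : I ⊗ M → M` is multiplication.
Since `w = ∑ aᵢ ⊗ g_{bᵢ} w`, and `μ w = 0` forces `g_j w = 0` because `M` is torsion-free, `μ` is
injective.
-/

open TensorProduct LinearMap

namespace Ideal

variable {R : Type*} [CommRing R] {I J : Ideal R}

theorem exists_fin_sum_mul_eq_of_mem_mul {c : R} (hc : c ∈ I * J) :
    ∃ (n : ℕ) (a : Fin n → I) (b : Fin n → J), ∑ i, (a i : R) * b i = c := by
  refine Submodule.mul_induction_on hc ?_ ?_
  · intro x hx y hy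
    exact ⟨1, fun _ => ⟨x, hx⟩, fun _ => ⟨y, hy⟩, by simp⟩
  · rintro x y ⟨n₁, a₁, b₁, rfl⟩ ⟨n₂, a₂, b₂, rfl⟩
    refine ⟨n₁ + n₂, Fin.append a₁ a₂, Fin.append b₁ b₂, ?_⟩
    simp only [Fin.sum_univ_add, Fin.append_left, Fin.append_right]

variable [IsDomain R] {c : R} (hc : c ≠ 0) (hIJ : I * J = span {c})
include hc hIJ

/-- The map `x ↦ j * x / c` on `I`. -/
noncomputable def mulDiv (j : J) : I →ₗ[R] R :=
  LinearEquiv.coord R R c hc ∘ₗ ((LinearMap.mulLeft R (j : R)).domRestrict I).codRestrict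
    (span {c}) fun x => hIJ ▸ mul_mem_mul_rev x.2 j.2

theorem mul_mulDiv_apply (j : J) (x : I) : c * mulDiv hc hIJ j x = j * x := by
  rw [mul_comm, ← smul_eq_mul]
  exact LinearEquiv.toSpanNonzeroSingleton_symm_apply_smul R R c hc _

theorem sum_mulDiv_smul {n : ℕ} {a : Fin n → I} {b : Fin n → J}
    (hab : ∑ i, (a i : R) * b i = c) (x : I) :
    ∑ i, mulDiv hc hIJ (b i) x • a i = x := by
  refine Subtype.ext (mul_left_cancel₀ hc ?_)
  calc c * ((∑ i, mulDiv hc hIJ (b i) x • a i : I) : R)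
      = ∑ i, (c * mulDiv hc hIJ (b i) x) * a i := by
        simp only [Submodule.coe_sum, Submodule.coe_smul, smul_eq_mul, Finset.mul_sum, mul_assoc]
    _ = (∑ i, (a i : R) * b i) * x := by
        simp only [mul_mulDiv_apply, Finset.sum_mul]
        exact Finset.sum_congr rfl fun i _ => by ring
    _ = c * x := by rw [hab]

variable {M : Type*} [AddCommGroup M] [Module R M]

theorem smul_lift_mulDiv (j : J) (w : I ⊗[R] M) :
    c • lift (lsmul R M ∘ₗ mulDiv hc hIJ j) w = (j : R) • lift (lsmul R M ∘ₗ I.subtype) w := by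
  induction w using TensorProduct.induction_on with
  | zero => simp
  | tmul x m => simp [smul_smul, mul_mulDiv_apply]
  | add x y hx hy => simp only [map_add, smul_add, hx, hy]

theorem sum_tmul_lift_mulDiv {n : ℕ} {a : Fin n → I} {b : Fin n → J}
    (hab : ∑ i, (a i : R) * b i = c) (w : I ⊗[R] M) :
    ∑ i, a i ⊗ₜ[R] lift (lsmul R M ∘ₗ mulDiv hc hIJ (b i)) w = w := by
  induction w using TensorProduct.induction_on with
  | zero => simp
  | tmul x m =>
    simp only [lift.tmul, comp_apply, lsmul_apply, ← smul_tmul, ← sum_tmul,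
      sum_mulDiv_smul hc hIJ hab]
  | add x y hx hy => simp only [map_add, tmul_add, Finset.sum_add_distrib, hx, hy]

theorem injective_lift_lsmul_comp_subtype_of_mul_eq_span_singleton [NoZeroSMulDivisors R M] :
    Function.Injective (lift (lsmul R M ∘ₗ I.subtype)) := by
  obtain ⟨n, a, b, hab⟩ := exists_fin_sum_mul_eq_of_mem_mul (hIJ ▸ mem_span_singleton_self c)
  refine (injective_iff_map_eq_zero _).mpr fun w hw => ?_
  have hg (j : J) : lift (lsmul R M ∘ₗ mulDiv hc hIJ j) w = 0 := by
    have := smul_lift_mulDiv hc hIJ j w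
    rw [hw, smul_zero] at this
    exact (smul_eq_zero.mp this).resolve_left hc
  rw [← sum_tmul_lift_mulDiv hc hIJ hab w]
  simp [hg]

end Ideal

theorem Module.flat_of_forall_fg_mul_eq_span_singleton {R : Type*} [CommRing R] [IsDomain R]
    (hpruf : ∀ I : Ideal R, I.FG → I ≠ ⊥ →
      ∃ (J : Ideal R) (c : R), c ≠ 0 ∧ I * J = Ideal.span {c})
    (M : Type*) [AddCommGroup M] [Module R M] [NoZeroSMulDivisors R M] :
    Module.Flat R M := by
  rw [Module.Flat.iff_lift_lsmul_comp_subtype_injective]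
  intro I hIfg
  obtain rfl | hI := eq_or_ne I ⊥
  · exact Function.injective_of_subsingleton _
  obtain ⟨J, c, hc, hIJ⟩ := hpruf I hIfg hI
  exact Ideal.injective_lift_lsmul_comp_subtype_of_mul_eq_span_singleton hc hIJ

/-- Over a Prüfer domain, every finitely presented torsion-free module is projective. -/
theorem stmt_12 {R : Type*} [CommRing R] [IsDomain R]
    (hpruf : ∀ I : Ideal R, I.FG → I ≠ ⊥ →
      ∃ (J : Ideal R) (c : R), J.FG ∧ c ≠ 0 ∧ I * J = Ideal.span {c})
    (M : Type*) [AddCommGroup M] [Module R M]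
    [Module.FinitePresentation R M] [NoZeroSMulDivisors R M] :
    Module.Projective R M := by
  have : Module.Flat R M := by
    refine Module.flat_of_forall_fg_mul_eq_span_singleton (fun I hI hI0 => ?_) M
    obtain ⟨J, c, -, hc, hIJ⟩ := hpruf I hI hI0
    exact ⟨J, c, hc, hIJ⟩
  exact Module.Flat.projective_of_finitePresentation
end

section
/- Let R be a Dedekind domain. Every finitely generated R-module M is isomorphic to a direct sum (⊕_{i=1}^k R/a_i) ⊕ P, where a_1 ⊇ a_2 ⊇ ⋯ ⊇ a_k is a decreasing chain of nonzero ideals of R and P is a finitely generated projective R-module. -/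
/-!
The torsion submodule splits off: `M ⧸ torsion R M` is torsion-free, hence flat over the Dedekind
domain `R`, hence projective, being finitely presented. The torsion part is the direct sum of its
`p`-primary components; such a component is a module over the discrete valuation ring `Rₚ`, where
the structure theorem over a PID writes it as `⨁ Rₚ ⧸ 𝔪 ^ k ≅ ⨁ R ⧸ p ^ k`. Finally, sort the
exponents `c p 0 ≤ c p 1 ≤ ⋯` of each prime `p` (padded by zeros to a common length) and glue, by
the Chinese remainder theorem, the `j`-th factors of all primes into `R ⧸ ⨅ p, p ^ c p j`.
-/

open Function

section

variable (R : Type*) [Semiring R]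

def LinearEquiv.piComm {α β : Type*} (A : α → β → Type*) [∀ a b, AddCommMonoid (A a b)]
    [∀ a b, Module R (A a b)] : (∀ a b, A a b) ≃ₗ[R] ∀ b a, A a b :=
  { Equiv.piComm A with
    map_add' := fun _ _ => rfl
    map_smul' := fun _ _ => rfl }

def LinearEquiv.piSubtypeOfSubsingleton {ι : Type*} (p : ι → Prop) [DecidablePred p]
    (A : ι → Type*) [∀ i, AddCommMonoid (A i)] [∀ i, Module R (A i)]
    (h : ∀ i, ¬ p i → Subsingleton (A i)) : (∀ i, A i) ≃ₗ[R] ∀ i : Subtype p, A i where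
  toFun f i := f i
  invFun g i := if hi : p i then g ⟨i, hi⟩ else 0
  map_add' _ _ := rfl
  map_smul' _ _ := rfl
  left_inv f := funext fun i => by
    by_cases hi : p i
    · simp [hi]
    · exact (h i hi).elim _ _
  right_inv g := funext fun i => by simp [i.2]

end

section CommRing

variable {R : Type*} [CommRing R]

noncomputable def Ideal.quotientInfLinearEquivPiQuotient {ι : Type*} [Finite ι]
    (I : ι → Ideal R) (hI : Pairwise (IsCoprime on I)) : (R ⧸ ⨅ i, I i) ≃ₗ[R] ∀ i, R ⧸ I i :=
  (AlgEquiv.ofRingEquiv (f := Ideal.quotientInfRingEquivPiQuotient I hI) fun _ => rfl).toLinearEquiv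

theorem exists_monotone_linearEquiv_pi_quotient_pow (I : Ideal R) {d N : ℕ} (h : d ≤ N)
    (k : Fin d → ℕ) :
    ∃ c : Fin N → ℕ, Monotone c ∧ Nonempty ((∀ i, R ⧸ I ^ k i) ≃ₗ[R] ∀ j, R ⧸ I ^ c j) := by
  let k' (j : Fin N) : ℕ := if hj : (j : ℕ) < d then k ⟨j, hj⟩ else 0
  have hpad (j : Fin N) (hj : ¬ (j : ℕ) < d) : Subsingleton (R ⧸ I ^ k' j) := by
    rw [Ideal.Quotient.subsingleton_iff]
    simp [k', hj]
  have hk (i : Fin d) : I ^ k i = I ^ k' (Fin.castLEquiv h i) := by simp [k']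
  let σ := Tuple.sort k'
  refine ⟨k' ∘ σ, Tuple.monotone_sort k', ⟨?_⟩⟩
  exact (LinearEquiv.piCongrRight fun i => Submodule.quotEquivOfEq _ _ (hk i)).trans <|
    (LinearEquiv.piCongrLeft R (fun j : {j : Fin N // (j : ℕ) < d} => R ⧸ I ^ k' j)
      (Fin.castLEquiv h)).trans <|
    (LinearEquiv.piSubtypeOfSubsingleton R _ _ hpad).symm.trans <|
    (LinearEquiv.piCongrLeft R (fun j => R ⧸ I ^ k' j) σ).symm

theorem exists_antitone_linearEquiv_pi_quotient [IsDomain R] {κ : Type*} [Fintype κ]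
    (q : κ → Ideal R) (hq : Injective q) (hmax : ∀ i, (q i).IsMaximal) (hbot : ∀ i, q i ≠ ⊥)
    (d : κ → ℕ) (k : ∀ i, Fin (d i) → ℕ) :
    ∃ (N : ℕ) (a : Fin N → Ideal R), Antitone a ∧ (∀ j, a j ≠ ⊥) ∧
      Nonempty ((∀ i l, R ⧸ q i ^ k i l) ≃ₗ[R] ∀ j, R ⧸ a j) := by
  classical
  choose c hc E using fun i => exists_monotone_linearEquiv_pi_quotient_pow (q i)
    (Finset.single_le_sum (fun _ _ => Nat.zero_le _) (Finset.mem_univ i) : d i ≤ ∑ i, d i) (k i)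
  have hcoprime (j : Fin (∑ i, d i)) : Pairwise (IsCoprime on fun i => q i ^ c i j) :=
    fun i i' hii' => (Ideal.isCoprime_iff_sup_eq.mpr
      ((hmax i).coprime_of_ne (hmax i') (hq.ne hii'))).pow
  refine ⟨∑ i, d i, fun j => ⨅ i, q i ^ c i j,
    fun j j' hjj' => iInf_mono fun i => Ideal.pow_le_pow_right (hc i hjj'), fun j => ?_,
    ⟨(LinearEquiv.piCongrRight fun i => (E i).some).trans <| (LinearEquiv.piComm R _).trans <|
      LinearEquiv.piCongrRight fun j =>
        (Ideal.quotientInfLinearEquivPiQuotient _ (hcoprime j)).symm⟩⟩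
  refine ne_bot_of_le_ne_bot ?_ (Ideal.prod_le_inf.trans_eq (Finset.inf_univ_eq_iInf _))
  exact Finset.prod_ne_zero_iff.mpr fun i _ => pow_ne_zero _ (hbot i)

end CommRing

section Dedekind

open Module Submodule

variable {R : Type*} [CommRing R] [IsDedekindDomain R]
  {M : Type*} [AddCommGroup M] [Module R M] [Module.Finite R M]

theorem exists_projective_linearEquiv_torsion_prod :
    ∃ P : Submodule R M, Module.Finite R P ∧ Projective R P ∧
      Nonempty (M ≃ₗ[R] torsion R M × P) := by
  have : FinitePresentation R (M ⧸ torsion R M) := finitePresentation_of_finite R _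
  have : Projective R (M ⧸ torsion R M) := Flat.projective_of_finitePresentation
  obtain ⟨f, hf⟩ := projective_lifting_property (torsion R M).mkQ LinearMap.id
    (torsion R M).mkQ_surjective
  let eP := LinearEquiv.ofInjective f (LeftInverse.injective (LinearMap.congr_fun hf))
  refine ⟨LinearMap.range f, Module.Finite.equiv eP, Projective.of_equiv eP, ⟨?_⟩⟩
  exact (lequivProdOfRightSplitExact (torsion R M).injective_subtype
    (by rw [range_subtype, ker_mkQ]) hf).symm.trans ((LinearEquiv.refl R _).prodCongr eP)

theorem exists_linearEquiv_pi_quotient_pow_of_isTorsionBySet {p : Ideal R} [p.IsMaximal]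
    (hp : p ≠ ⊥) {e : ℕ} (hM : IsTorsionBySet R M (p ^ e : Ideal R)) :
    ∃ (d : ℕ) (k : Fin d → ℕ), Nonempty (M ≃ₗ[R] ∀ i, R ⧸ p ^ k i) := by
  let Rₚ := Localization.AtPrime p
  have : IsDiscreteValuationRing Rₚ :=
    IsLocalization.AtPrime.isDiscreteValuationRing_of_dedekind_domain R hp Rₚ
  obtain ⟨ϖ, hϖ⟩ := IsDiscreteValuationRing.exists_irreducible Rₚ
  let quotPow (n : ℕ) := IsLocalization.AtPrime.equivQuotMaximalIdealPow p Rₚ n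
  -- `M` is a module over `R ⧸ p ^ e ≃ Rₚ ⧸ 𝔪 ^ e`, hence over `Rₚ`.
  let := hM.module
  let : Module Rₚ M := Module.compHom M ((quotPow e).symm.toRingHom.comp (Ideal.Quotient.mk _))
  have : IsScalarTower R Rₚ M := IsScalarTower.of_algebraMap_smul fun r x => by
    change (quotPow e).symm (algebraMap R _ r) • x = r • x
    rw [AlgEquiv.commutes]
    exact hM.mk_smul r x
  have : Module.Finite Rₚ M := Module.Finite.of_restrictScalars_finite R Rₚ M
  have hϖM : IsTorsion' M (Submonoid.powers ϖ) := fun x => by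
    refine ⟨⟨ϖ ^ e, e, rfl⟩, ?_⟩
    change (quotPow e).symm (Ideal.Quotient.mk _ (ϖ ^ e)) • x = 0
    rw [Ideal.Quotient.eq_zero_iff_mem.mpr (Ideal.pow_mem_pow
      ((IsLocalRing.mem_maximalIdeal _).mpr hϖ.not_isUnit) e), map_zero, zero_smul]
  obtain ⟨d, k, ⟨E⟩⟩ := torsion_by_prime_power_decomposition hϖ hϖM
  refine ⟨d, k, ⟨(E.restrictScalars R).trans <|
    (DirectSum.linearEquivFunOnFintype R _ _).trans <| LinearEquiv.piCongrRight fun i => ?_⟩⟩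
  refine ((quotEquivOfEq _ _ ?_).restrictScalars R).trans (quotPow (k i)).symm.toLinearEquiv
  rw [hϖ.maximalIdeal_eq, Ideal.span_singleton_pow]

theorem exists_linearEquiv_pi_pi_quotient_pow_of_isTorsion (hM : IsTorsion R M) :
    ∃ (P : Finset (Ideal R)) (d : P → ℕ) (k : ∀ p, Fin (d p) → ℕ),
      (∀ p : P, (p : Ideal R).IsMaximal ∧ (p : Ideal R) ≠ ⊥) ∧
        Nonempty (M ≃ₗ[R] ∀ p : P, ∀ i, R ⧸ (p : Ideal R) ^ k p i) := by
  obtain ⟨P, _, hP, e, hint⟩ := exists_isInternal_prime_power_torsion hM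
  have hPmax (p : P) : (p : Ideal R).IsMaximal ∧ (p : Ideal R) ≠ ⊥ :=
    ⟨(Ideal.isPrime_of_prime (hP p p.2)).isMaximal (hP p p.2).ne_zero, (hP p p.2).ne_zero⟩
  choose d k E using fun p : P =>
    have := (hPmax p).1
    exists_linearEquiv_pi_quotient_pow_of_isTorsionBySet (hPmax p).2
      (torsionBySet_isTorsionBySet (R := R) (M := M) ((p : Ideal R) ^ e p : Ideal R))
  exact ⟨P, d, k, hPmax, ⟨(LinearEquiv.ofBijective (DirectSum.coeLinearMap _) hint).symm.trans <|
    (DirectSum.linearEquivFunOnFintype R _ _).trans <|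
      LinearEquiv.piCongrRight fun p => (E p).some⟩⟩

end Dedekind

theorem stmt_13_general {R : Type*} [CommRing R] [IsDedekindDomain R]
    (M : Type*) [AddCommGroup M] [Module R M] [Module.Finite R M] :
    ∃ (k : ℕ) (a : Fin k → Ideal R),
      (∀ i j : Fin k, i ≤ j → a j ≤ a i) ∧ (∀ i, a i ≠ ⊥) ∧
      ∃ P : Submodule R M, Module.Finite R ↥P ∧ Module.Projective R ↥P ∧
        Nonempty (M ≃ₗ[R] (((i : Fin k) → R ⧸ a i) × ↥P)) := by
  obtain ⟨P, hPfin, hPproj, ⟨EP⟩⟩ := exists_projective_linearEquiv_torsion_prod (R := R) (M := M)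
  obtain ⟨Q, d, e, hQ, ⟨ET⟩⟩ := exists_linearEquiv_pi_pi_quotient_pow_of_isTorsion
    (M := Submodule.torsion R M) Submodule.torsion_isTorsion
  obtain ⟨k, a, ha, ha0, ⟨EA⟩⟩ := exists_antitone_linearEquiv_pi_quotient (Subtype.val : Q → _)
    Subtype.val_injective (fun p => (hQ p).1) (fun p => (hQ p).2) d e
  exact ⟨k, a, fun _ _ h => ha h, ha0, P, hPfin, hPproj,
    ⟨EP.trans ((ET.trans EA).prodCongr (.refl R P))⟩⟩

/-- Over a Dedekind domain, every finitely generated module is isomorphic to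
`(⊕ᵢ R⧸aᵢ) ⊕ P` with `a₁ ⊇ ⋯ ⊇ a_k` nonzero ideals and `P` finitely generated
projective. -/
theorem stmt_13 {R : Type*} [CommRing R] [IsDomain R] [IsDedekindDomain R]
    (M : Type*) [AddCommGroup M] [Module R M] [Module.Finite R M] :
    ∃ (k : ℕ) (a : Fin k → Ideal R),
      (∀ i j : Fin k, i ≤ j → a j ≤ a i) ∧ (∀ i, a i ≠ ⊥) ∧
      ∃ P : Submodule R M, Module.Finite R ↥P ∧ Module.Projective R ↥P ∧
        Nonempty (M ≃ₗ[R] (((i : Fin k) → R ⧸ a i) × ↥P)) :=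
  stmt_13_general M
end

section
/- Let R be a zero-dimensional commutative ring, in the sense that for every a ∈ R there exist n ∈ ℕ and x ∈ R with a^n·(1 − a·x) = 0. If a, b ∈ R generate the same principal ideal, ⟨a⟩ = ⟨b⟩, then a and b are associated: there exists a unit w ∈ Rˣ with a = w·b. -/
/-- In a zero-dimensional commutative ring, two elements generating the same principal
ideal are associated. -/
theorem stmt_14 {R : Type*} [CommRing R]
    (hzd : ∀ a : R, ∃ (n : ℕ) (x : R), a ^ n * (1 - a * x) = 0)
    (a b : R) (h : Ideal.span ({a} : Set R) = Ideal.span ({b} : Set R)) :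
    ∃ w : Rˣ, a = (w : R) * b := by
  obtain ⟨u, hu⟩ : b ∣ a := Ideal.mem_span_singleton.mp
    (h ▸ Ideal.mem_span_singleton_self a)
  obtain ⟨v, hv⟩ : a ∣ b := Ideal.mem_span_singleton.mp
    (h ▸ Ideal.mem_span_singleton_self b)
  obtain ⟨n, x, hnx⟩ := hzd u
  have hm : u ^ (n + 1) * (1 - u * x) = 0 := by linear_combination u * hnx
  have key : u ^ (n + 1) * (u * x) = u ^ (n + 1) := by linear_combination -hm
  have keyk : ∀ k : ℕ, u ^ (n + 1) * (u * x) ^ k = u ^ (n + 1) := by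
    intro k
    induction k with
    | zero => ring
    | succ k ih => linear_combination (u * x) ^ k * key + ih
  set e : R := (u * x) ^ (n + 1) with he_def
  have he : e * e = e := by
    simp only [he_def]
    linear_combination x ^ (n + 1) * keyk (n + 1)
  have hue : u ^ (n + 1) * (1 - e) = 0 := by
    simp only [he_def]
    linear_combination -keyk (n + 1)
  have hav : ∀ k : ℕ, a = a * (v * u) ^ k := by
    intro k
    induction k with
    | zero => ring
    | succ k ih =>
      calc a = b * u := hu
        _ = (a * v) * u := by rw [← hv]
        _ = a * (v * u) ^ (k + 1) := by
            rw [pow_succ]; nth_rewrite 1 [ih]; ring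
  have hae : a * (1 - e) = 0 := by
    simp only [he_def] at hue ⊢
    linear_combination (1 - (u * x) ^ (n + 1)) * hav (n + 1) + a * v ^ (n + 1) * hue
  have hbe : b * (1 - e) = 0 := by
    linear_combination v * hae + (1 - e) * hv
  have hw1 : (u * e + (1 - e)) * (u ^ n * x ^ (n + 1) * e + (1 - e)) = 1 := by
    simp only [he_def] at he ⊢
    linear_combination ((u * x) ^ (n + 1) + 2 - u - u ^ n * x ^ (n + 1)) * he
  refine ⟨⟨u * e + (1 - e), u ^ n * x ^ (n + 1) * e + (1 - e), hw1, by
    rw [mul_comm]; exact hw1⟩, ?_⟩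
  show a = (u * e + (1 - e)) * b
  linear_combination hu + (u - 1) * hbe
end

section
/- Let R be a Prüfer domain of Krull dimension at most 1, and let a_1 ⊇ ⋯ ⊇ a_n and b_1 ⊇ ⋯ ⊇ b_n be two decreasing chains of nonzero finitely generated ideals of R such that the partial products agree: ∏_{i=1}^k a_i = ∏_{i=1}^k b_i for every k ∈ {1,…,n}. Then a_k = b_k for every k, and consequently the finitely presented torsion modules ⊕_{i=1}^n R/a_i and ⊕_{i=1}^n R/b_i are isomorphic. (The structure of a finitely presented torsion module over such a ring is thus characterized by its Fitting ideals.) -/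
/-- Cancel a nonzero principal ideal in a domain. -/
lemma span_cancel_aux {R : Type*} [CommRing R] [IsDomain R] {c : R} (hc : c ≠ 0)
    {A B : Ideal R} (h : Ideal.span {c} * A = Ideal.span {c} * B) : A = B := by
  have key : ∀ A B : Ideal R, Ideal.span {c} * A = Ideal.span {c} * B → A ≤ B := by
    intro A B h x hx
    have : c * x ∈ Ideal.span {c} * B := by
      rw [← h]; exact Ideal.mem_span_singleton_mul.2 ⟨x, hx, rfl⟩
    obtain ⟨z, hz, hzx⟩ := Ideal.mem_span_singleton_mul.1 this
    rwa [← mul_left_cancel₀ hc hzx]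
  exact le_antisymm (key A B h) (key B A h.symm)

/-- Over a Prüfer domain of Krull dimension at most 1, two decreasing chains of nonzero
finitely generated ideals with the same partial products are equal; consequently the
associated finitely presented torsion modules are isomorphic. -/
theorem stmt_17 {R : Type*} [CommRing R] [IsDomain R]
    (hpruf : ∀ I : Ideal R, I.FG → I ≠ ⊥ →
      ∃ (J : Ideal R) (c : R), J.FG ∧ c ≠ 0 ∧ I * J = Ideal.span {c})
    (hdim : ∀ p q r : Ideal R, p.IsPrime → q.IsPrime → r.IsPrime → p < q → q < r → False)
    {n : ℕ} (a b : Fin n → Ideal R)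
    (hachain : ∀ i j : Fin n, i ≤ j → a j ≤ a i)
    (hbchain : ∀ i j : Fin n, i ≤ j → b j ≤ b i)
    (hafg : ∀ i, (a i).FG ∧ a i ≠ ⊥) (hbfg : ∀ i, (b i).FG ∧ b i ≠ ⊥)
    (hprod : ∀ k : Fin n, (∏ i ∈ Finset.Iic k, a i) = ∏ i ∈ Finset.Iic k, b i) :
    (∀ k, a k = b k) ∧
    Nonempty (((i : Fin n) → R ⧸ a i) ≃ₗ[R] ((i : Fin n) → R ⧸ b i)) := by
  have main : ∀ k, a k = b k := by
    have H : ∀ m : ℕ, ∀ k : Fin n, (k : ℕ) < m → a k = b k := by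
      intro m
      induction m with
      | zero => intro k hk; omega
      | succ m ih =>
      intro k hk
      have ih' : ∀ i : Fin n, i < k → a i = b i := fun i hi => ih i (by omega)
      -- products over Iio k agree
      have hIio : (∏ i ∈ Finset.Iio k, a i) = ∏ i ∈ Finset.Iio k, b i :=
        Finset.prod_congr rfl fun i hi => ih' i (Finset.mem_Iio.1 hi)
      set P := ∏ i ∈ Finset.Iio k, a i with hP
      have hsplit : ∀ c : Fin n → Ideal R,
          (∏ i ∈ Finset.Iic k, c i) = (∏ i ∈ Finset.Iio k, c i) * c k := by
        intro c
        rw [← Finset.Iio_insert, Finset.prod_insert (by simp), mul_comm]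
      have hPk : P * a k = P * b k := by
        have := hprod k
        rw [hsplit a, hsplit b, ← hIio] at this
        exact this
      -- P is fg and nonzero
      have hPfg : P.FG := by
        refine Finset.prod_induction _ Ideal.FG (fun x y hx hy => Submodule.FG.mul hx hy)
          ⟨{1}, by simp⟩ fun i _ => (hafg i).1
      have hPne : P ≠ ⊥ := by
        refine Finset.prod_induction _ (fun I : Ideal R => I ≠ ⊥)
          (fun x y hx hy h => ?_) one_ne_zero fun i _ => (hafg i).2
        rcases Ideal.mul_eq_bot.1 h with h | h <;> [exact hx h; exact hy h]
      obtain ⟨J, c, _, hc, hJc⟩ := hpruf P hPfg hPne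
      apply span_cancel_aux hc
      rw [← hJc]
      ring_nf
      rw [mul_comm P J, mul_assoc, mul_assoc, hPk]
    exact fun k => H n k k.isLt
  refine ⟨main, ⟨LinearEquiv.piCongrRight fun i => Submodule.quotEquivOfEq _ _ (main i)⟩⟩
end
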